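/- arXiv:1908.08098 — 3 statements merged into one kernel-verified Lean document; each statement's English description precedes it below -/
import Mathlib

section
/- Let N be a finite index set of neighbor nodes with values x : N → ℝ, and let G ⊆ N be the set of nonfaulty nodes with |N \ G| ≤ b. Suppose |N| ≥ 2b, let B⁻ ⊆ N be a set of b indices carrying the b smallest values (i.e., |B⁻| = b and x(m) ≤ x(i) for all m ∈ B⁻ and i ∈ N \ B⁻), let B⁺ ⊆ N \ B⁻ be a set of b indices carrying the b largest values among N \ B⁻ (i.e., |B⁺| = b and x(i) ≤ x(m) for all m ∈ B⁺ and i ∈ N \ B⁻ \ B⁺), and let T = N \ B⁻ \ B⁺ be the trimmed set. If some faulty index i ∈ T \ G survives the trimming, then there exist nonfaulty indices m' ∈ B⁻ ∩ G and m'' ∈ B⁺ ∩ G such that x(m') ≤ x(i) ≤ x(m''); consequently there exists θ ∈ [0,1] with x(i) = θ·x(m') + (1−θ)·x(m''). -/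
lemma convex_combo_aux {a c d : ℝ} (h1 : a ≤ c) (h2 : c ≤ d) :
    ∃ θ ∈ Set.Icc (0 : ℝ) 1, c = θ * a + (1 - θ) * d := by
  rcases eq_or_lt_of_le (h1.trans h2) with h | h
  · exact ⟨1, ⟨zero_le_one, le_refl 1⟩, by
      have hca : c = a := le_antisymm (h ▸ h2) h1
      rw [hca]; ring⟩
  · have hda : d - a ≠ 0 := by linarith
    refine ⟨(d - c) / (d - a), ⟨div_nonneg (by linarith) (by linarith), ?_⟩, ?_⟩
    · rw [div_le_one (by linarith)]; linarith
    · field_simp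
      ring

/-- BRIDGE screening lemma: after trimming the `b` smallest and `b` largest neighbor
values, any surviving value from a faulty node is sandwiched between two values from
nonfaulty nodes, and hence is a convex combination of them. -/
theorem bridge_trimmed_mean_sandwich
    {ι : Type*} [DecidableEq ι] (b : ℕ) (N G Bminus Bplus T : Finset ι) (x : ι → ℝ)
    (hG : G ⊆ N) (hfaulty : (N \ G).card ≤ b)
    (hN : 2 * b ≤ N.card)
    (hBm : Bminus ⊆ N) (hBmcard : Bminus.card = b)
    (hBmmin : ∀ m ∈ Bminus, ∀ i ∈ N \ Bminus, x m ≤ x i)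
    (hBp : Bplus ⊆ N \ Bminus) (hBpcard : Bplus.card = b)
    (hBpmax : ∀ m ∈ Bplus, ∀ i ∈ (N \ Bminus) \ Bplus, x i ≤ x m)
    (hT : T = (N \ Bminus) \ Bplus)
    (i : ι) (hi : i ∈ T \ G) :
    ∃ m' ∈ Bminus ∩ G, ∃ m'' ∈ Bplus ∩ G,
      x m' ≤ x i ∧ x i ≤ x m'' ∧
        ∃ θ ∈ Set.Icc (0 : ℝ) 1, x i = θ * x m' + (1 - θ) * x m'' := by
  subst hT
  rw [Finset.mem_sdiff] at hi
  obtain ⟨hiT, hiG⟩ := hi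
  rw [Finset.mem_sdiff, Finset.mem_sdiff] at hiT
  obtain ⟨⟨hiN, hiBm⟩, hiBp⟩ := hiT
  have hiF : i ∈ N \ G := Finset.mem_sdiff.mpr ⟨hiN, hiG⟩
  -- Bminus ∩ G nonempty
  have key : ∀ S : Finset ι, S ⊆ N → S.card = b → i ∉ S → (S ∩ G).Nonempty := by
    intro S hSN hScard hiS
    by_contra hempty
    rw [Finset.not_nonempty_iff_eq_empty] at hempty
    have hSF : S ⊆ N \ G := by
      intro a ha
      refine Finset.mem_sdiff.mpr ⟨hSN ha, fun haG => ?_⟩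
      exact Finset.notMem_empty a (hempty ▸ Finset.mem_inter.mpr ⟨ha, haG⟩)
    have : (insert i S) ⊆ N \ G := Finset.insert_subset hiF hSF
    have hcard : (insert i S).card ≤ b := le_trans (Finset.card_le_card this) hfaulty
    rw [Finset.card_insert_of_notMem hiS, hScard] at hcard
    omega
  obtain ⟨m', hm'⟩ := key Bminus hBm hBmcard hiBm
  obtain ⟨m'', hm''⟩ := key Bplus (hBp.trans (Finset.sdiff_subset)) hBpcard hiBp
  rw [Finset.mem_inter] at hm' hm''
  have h1 : x m' ≤ x i := hBmmin m' hm'.1 i (Finset.mem_sdiff.mpr ⟨hiN, hiBm⟩)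
  have h2 : x i ≤ x m'' := hBpmax m'' hm''.1 i
    (Finset.mem_sdiff.mpr ⟨Finset.mem_sdiff.mpr ⟨hiN, hiBm⟩, hiBp⟩)
  exact ⟨m', Finset.mem_inter.mpr hm', m'', Finset.mem_inter.mpr hm'', h1, h2,
    convex_combo_aux h1 h2⟩
end

section
/- Let N be a finite index set with values x : N → ℝ, let G ⊆ N with |N \ G| ≤ b, let j ∉ N be an additional index with value x_j ∈ ℝ, and assume |N| ≥ 2b + 1. Let B⁻ ⊆ N be a set of b indices carrying the b smallest values, B⁺ ⊆ N \ B⁻ a set of b indices carrying the b largest values among N \ B⁻, and T = N \ B⁻ \ B⁺. Then there exist weights y : (N ∪ {j}) → ℝ with y_i ≥ 0 for all i, y_i = 0 for every i ∉ G ∪ {j}, Σᵢ y_i = 1, and y_j = 1/(|N| − 2b + 1), such that (1/(|N| − 2b + 1))·(x_j + Σ_{i∈T} x(i)) = Σᵢ y_i · x_i (with x_i = x(i) for i ∈ N). -/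
/-!
At most `b` indices are faulty and `b` values are trimmed on each side, so a faulty index that
survives the trimming has a good index among those trimmed below it and one among those trimmed
above it. Its value therefore lies between the smallest and the largest good values `x m ≤ x p`,
and its weight in the uniform average over `{j} ∪ T` can be split between `m` and `p` without
changing the weighted sum.
-/

open Finset

section

variable {ι : Type*} [DecidableEq ι]

theorem exists_mem_inter_of_card_sdiff_le {s N G : Finset ι} {k : ι} (hs : s ⊆ N)
    (hcard : (N \ G).card ≤ s.card) (hk : k ∈ N \ G) (hks : k ∉ s) : ∃ m ∈ s, m ∈ G := by
  by_contra! h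
  have hsub : s ⊆ N \ G := fun i hi => mem_sdiff.2 ⟨hs hi, h i hi⟩
  exact (card_lt_card ((ssubset_iff_of_subset hsub).2 ⟨k, hk, hks⟩)).not_ge hcard

theorem exists_mem_le_of_notMem_lowest {α : Type*} [LinearOrder α] {s N G : Finset ι}
    {x : ι → α} {k : ι} (hs : s ⊆ N) (hcard : (N \ G).card ≤ s.card)
    (hmin : ∀ m ∈ s, ∀ i ∈ N \ s, x m ≤ x i) (hk : k ∈ N \ G) (hks : k ∉ s) :
    ∃ m ∈ G, x m ≤ x k := by
  obtain ⟨m, hms, hmG⟩ := exists_mem_inter_of_card_sdiff_le hs hcard hk hks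
  exact ⟨m, hmG, hmin m hms k (mem_sdiff.2 ⟨(mem_sdiff.1 hk).1, hks⟩)⟩

theorem exists_mem_ge_of_notMem_highest {α : Type*} [LinearOrder α] {s N G : Finset ι}
    {x : ι → α} {k : ι} (hs : s ⊆ N) (hcard : (N \ G).card ≤ s.card)
    (hmax : ∀ m ∈ s, ∀ i ∈ N \ s, x i ≤ x m) (hk : k ∈ N \ G) (hks : k ∉ s) :
    ∃ p ∈ G, x k ≤ x p :=
  exists_mem_le_of_notMem_lowest (α := αᵒᵈ) hs hcard hmax hk hks

theorem exists_mem_le_and_exists_mem_ge_of_mem_trimmed {α : Type*} [LinearOrder α]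
    {N G Bminus Bplus : Finset ι} {x : ι → α} {k : ι} (hBm : Bminus ⊆ N)
    (hBmcard : (N \ G).card ≤ Bminus.card) (hBmmin : ∀ m ∈ Bminus, ∀ i ∈ N \ Bminus, x m ≤ x i)
    (hBp : Bplus ⊆ N \ Bminus) (hBpcard : (N \ G).card ≤ Bplus.card)
    (hBpmax : ∀ m ∈ Bplus, ∀ i ∈ (N \ Bminus) \ Bplus, x i ≤ x m)
    (hk : k ∈ (N \ Bminus) \ Bplus) (hkG : k ∉ G) :
    (∃ m ∈ G, x m ≤ x k) ∧ ∃ p ∈ G, x k ≤ x p := by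
  simp only [mem_sdiff] at hk
  exact ⟨exists_mem_le_of_notMem_lowest hBm hBmcard hBmmin (mem_sdiff.2 ⟨hk.1.1, hkG⟩) hk.1.2,
    exists_mem_ge_of_notMem_highest hBp
      ((card_le_card (sdiff_subset_sdiff sdiff_subset le_rfl)).trans hBpcard) hBpmax
      (mem_sdiff.2 ⟨mem_sdiff.2 hk.1, hkG⟩) hk.2⟩

theorem exists_weights_supported_on_of_mem_Icc {U H : Finset ι}
    {w x : ι → ℝ} {m p : ι} (hmU : m ∈ U) (hpU : p ∈ U) (hmH : m ∈ H) (hpH : p ∈ H)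
    (hw : ∀ i ∈ U, 0 ≤ w i) (hx : ∀ k ∈ U \ H, w k ≠ 0 → x k ∈ Set.Icc (x m) (x p)) :
    ∃ y : ι → ℝ, (∀ i ∈ U, 0 ≤ y i) ∧ (∀ i ∈ U, i ∉ H → y i = 0) ∧
      ∑ i ∈ U, y i = ∑ i ∈ U, w i ∧ (∀ i ∈ H, i ≠ m → i ≠ p → y i = w i) ∧
      ∑ i ∈ U, y i * x i = ∑ i ∈ U, w i * x i := by
  have hsplit : ∀ k, ∃ t : ℝ, 0 ≤ t ∧ t ≤ 1 ∧
      (x k ∈ Set.Icc (x m) (x p) → t * x m + (1 - t) * x p = x k) := by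
    intro k
    by_cases hk : x k ∈ Set.Icc (x m) (x p)
    · obtain ⟨a, b, ha, hb, hab, h⟩ := (Convex.mem_Icc (hk.1.trans hk.2)).1 hk
      exact ⟨a, ha, by linarith, fun _ => by rw [← h, ← hab]; ring⟩
    · exact ⟨0, le_rfl, zero_le_one, fun h => absurd h hk⟩
  choose t ht0 ht1 ht using hsplit
  have hmove : ∀ k ∈ U \ H, t k * w k * x m + (1 - t k) * w k * x p = w k * x k := by
    intro k hk
    by_cases hwk : w k = 0
    · simp [hwk]
    · rw [← ht k (hx k hk hwk)]; ring
  set Sm := ∑ k ∈ U \ H, t k * w k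
  set Sp := ∑ k ∈ U \ H, (1 - t k) * w k
  refine ⟨fun i => (if i ∈ H then w i else 0) + (if i = m then Sm else 0) +
    (if i = p then Sp else 0), ?_, ?_, ?_, ?_, ?_⟩
  · have hSm : 0 ≤ Sm := sum_nonneg fun k hk => mul_nonneg (ht0 k) (hw k (mem_sdiff.1 hk).1)
    have hSp : 0 ≤ Sp := sum_nonneg fun k hk =>
      mul_nonneg (sub_nonneg.2 (ht1 k)) (hw k (mem_sdiff.1 hk).1)
    intro i hi
    have := hw i hi
    dsimp only
    split_ifs <;> linarith
  · intro i _ hiH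
    simp [hiH, (ne_of_mem_of_not_mem hmH hiH).symm, (ne_of_mem_of_not_mem hpH hiH).symm]
  · have hS : Sm + Sp = ∑ k ∈ U \ H, w k := by
      rw [← sum_add_distrib]; exact sum_congr rfl fun k _ => by ring
    simp only [sum_add_distrib, sum_ite_mem, sum_ite_eq', hmU, hpU, if_true]
    rw [add_assoc, hS, sum_inter_add_sum_sdiff]
  · intro i hiH him hip
    simp [hiH, him, hip]
  · have hS : Sm * x m + Sp * x p = ∑ k ∈ U \ H, w k * x k := by
      rw [sum_mul, sum_mul, ← sum_add_distrib]; exact sum_congr rfl hmove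
    simp only [add_mul, ite_mul, zero_mul, sum_add_distrib, sum_ite_mem, sum_ite_eq', hmU, hpU,
      if_true]
    rw [add_assoc, hS, sum_inter_add_sum_sdiff]

end

/-- BRIDGE matrix-form representation lemma: the trimmed-mean update at a node `j`
(averaging its own value together with the trimmed set `T` of neighbor values) can be
written as a convex combination of the values at nonfaulty indices and the node's own
value only, with the node's own weight equal to `1/(|N| - 2b + 1)`. -/
theorem bridge_trimmed_mean_convex_combination
    {ι : Type*} [DecidableEq ι] (b : ℕ) (N G Bminus Bplus T : Finset ι) (x : ι → ℝ)
    (j : ι) (hj : j ∉ N)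
    (hG : G ⊆ N) (hfaulty : (N \ G).card ≤ b)
    (hN : 2 * b + 1 ≤ N.card)
    (hBm : Bminus ⊆ N) (hBmcard : Bminus.card = b)
    (hBmmin : ∀ m ∈ Bminus, ∀ i ∈ N \ Bminus, x m ≤ x i)
    (hBp : Bplus ⊆ N \ Bminus) (hBpcard : Bplus.card = b)
    (hBpmax : ∀ m ∈ Bplus, ∀ i ∈ (N \ Bminus) \ Bplus, x i ≤ x m)
    (hT : T = (N \ Bminus) \ Bplus) :
    ∃ y : ι → ℝ,
      (∀ i ∈ insert j N, 0 ≤ y i) ∧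
      (∀ i ∈ insert j N, i ∉ G ∪ {j} → y i = 0) ∧
      (∑ i ∈ insert j N, y i = 1) ∧
      y j = 1 / ((N.card : ℝ) - 2 * b + 1) ∧
      (1 / ((N.card : ℝ) - 2 * b + 1)) * (x j + ∑ i ∈ T, x i)
        = ∑ i ∈ insert j N, y i * x i := by
  have hTN : T ⊆ N := hT ▸ sdiff_subset.trans sdiff_subset
  have hjT : j ∉ T := fun h => hj (hTN h)
  have hTcard : T.card + 2 * b = N.card := by
    rw [hT, card_sdiff_of_subset hBp, card_sdiff_of_subset hBm, hBmcard, hBpcard]; omega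
  have hGne : G.Nonempty := by
    rw [← card_pos]; have := card_sdiff_of_subset hG; omega
  obtain ⟨m, hmG, hm⟩ := G.exists_min_image x hGne
  obtain ⟨p, hpG, hp⟩ := G.exists_max_image x hGne
  have hrange : ∀ k ∈ T \ G, x k ∈ Set.Icc (x m) (x p) := by
    intro k hk
    rw [mem_sdiff, hT] at hk
    obtain ⟨⟨m', hm'G, hm'⟩, p', hp'G, hp'⟩ := exists_mem_le_and_exists_mem_ge_of_mem_trimmed hBm
      (hBmcard ▸ hfaulty) hBmmin hBp (hBpcard ▸ hfaulty) hBpmax hk.1 hk.2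
    exact ⟨(hm m' hm'G).trans hm', hp'.trans (hp p' hp'G)⟩
  have hden : (N.card : ℝ) - 2 * b + 1 = 1 + T.card := by
    rw [← hTcard]; push_cast; ring
  rw [hden]
  set c := 1 / (1 + (T.card : ℝ))
  have hc : c * (1 + T.card) = 1 := one_div_mul_cancel (by positivity)
  have hw : ∀ f : ι → ℝ, ∑ i ∈ insert j N, (if i ∈ insert j T then c else 0) * f i
      = c * (f j + ∑ i ∈ T, f i) := by
    intro f
    simp only [ite_mul, zero_mul, sum_ite_mem, inter_eq_right.2 (insert_subset_insert j hTN),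
      sum_insert hjT, mul_add, mul_sum]
  obtain ⟨y, hy0, hyH, hysum, hyw, hyx⟩ := exists_weights_supported_on_of_mem_Icc
    (U := insert j N) (H := G ∪ {j}) (w := fun i => if i ∈ insert j T then c else 0)
    (mem_insert_of_mem (hG hmG)) (mem_insert_of_mem (hG hpG)) (mem_union_left _ hmG)
    (mem_union_left _ hpG) (fun i _ => by split_ifs <;> positivity)
    (fun k hk hwk => hrange k <| by
      have hkT : k ∈ insert j T := by by_contra h; exact hwk (if_neg h)
      simp only [mem_sdiff, mem_union, mem_singleton, not_or] at hk ⊢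
      exact ⟨(mem_insert.1 hkT).resolve_left hk.2.2, hk.2.1⟩)
  refine ⟨y, hy0, hyH, ?_, ?_, ?_⟩
  · simpa [hysum, hc] using hw 1
  · rw [hyw j (mem_union_right _ (mem_singleton_self j)) (fun h => hj (h ▸ hG hmG))
      (fun h => hj (h ▸ hG hpG)), if_pos (mem_insert_self j T)]
  · rw [hyx, hw]
end

section
/- Let d, M ∈ ℕ, let f₁, …, f_M : EuclideanSpace ℝ (Fin d) → ℝ be differentiable functions whose gradients ∇f_i are L'-Lipschitz (i.e., ‖∇f_i(w₁) − ∇f_i(w₂)‖ ≤ L'·‖w₁ − w₂‖ for all w₁, w₂). For each coordinate k ∈ Fin d, let α^k ∈ Fin M → ℝ be a stochastic vector (α^k_i ≥ 0 and Σ_i α^k_i = 1). Let w₁, …, w_M and v be points with ‖w_i − v‖ ≤ ε for all i. Define vectors g₁, g₂ ∈ EuclideanSpace ℝ (Fin d) coordinate-wise by [g₁]_k = Σ_i α^k_i·[∇f_i(w_i)]_k and [g₂]_k = Σ_i α^k_i·[∇f_i(v)]_k. Then ‖g₁ − g₂‖ ≤ √d·L'·ε. -/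
lemma abs_coord_le_norm {d : ℕ} (x : EuclideanSpace ℝ (Fin d)) (k : Fin d) :
    |x k| ≤ ‖x‖ := by
  rw [EuclideanSpace.norm_eq, ← Real.sqrt_sq_eq_abs]
  apply Real.sqrt_le_sqrt
  have := Finset.single_le_sum (f := fun j => ‖x j‖ ^ 2)
    (fun j _ => sq_nonneg _) (Finset.mem_univ k)
  simpa [Real.norm_eq_abs, sq_abs] using this

/-- Bound on the distance `a₃` between the virtual-sequence gradient term `g₁`
(a per-coordinate stochastic-weighted combination of local gradients evaluated at the
local iterates) and `g₂` (the same combination evaluated at the common consensus point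
`v`), given that all local iterates are within `ε` of `v`:
`‖g₁ − g₂‖ ≤ √d · L' · ε`. -/
theorem bridge_gradient_difference_bound
    (d M : ℕ) (L' ε : ℝ)
    (f : Fin M → EuclideanSpace ℝ (Fin d) → ℝ)
    (hdiff : ∀ i, Differentiable ℝ (f i))
    (hLip : ∀ i w₁ w₂, ‖gradient (f i) w₁ - gradient (f i) w₂‖ ≤ L' * ‖w₁ - w₂‖)
    (α : Fin d → Fin M → ℝ)
    (hα0 : ∀ k i, 0 ≤ α k i) (hα1 : ∀ k, ∑ i, α k i = 1)
    (w : Fin M → EuclideanSpace ℝ (Fin d)) (v : EuclideanSpace ℝ (Fin d))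
    (hw : ∀ i, ‖w i - v‖ ≤ ε)
    (g₁ g₂ : EuclideanSpace ℝ (Fin d))
    (hg₁ : ∀ k, g₁ k = ∑ i, α k i * gradient (f i) (w i) k)
    (hg₂ : ∀ k, g₂ k = ∑ i, α k i * gradient (f i) v k) :
    ‖g₁ - g₂‖ ≤ Real.sqrt d * L' * ε := by
  rcases Nat.eq_zero_or_pos d with hd | hd
  · subst hd
    have : g₁ - g₂ = 0 := by
      ext k; exact absurd k.2 (by simp)
    rw [this, norm_zero]
    simp
  rcases Nat.eq_zero_or_pos M with hM | hM
  · exfalso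
    have := hα1 ⟨0, hd⟩
    subst hM
    simp at this
  have hε : 0 ≤ ε := le_trans (norm_nonneg _) (hw ⟨0, hM⟩)
  have hL' : 0 ≤ L' := by
    have h := hLip ⟨0, hM⟩ (EuclideanSpace.single ⟨0, hd⟩ (1:ℝ)) 0
    have h1 : ‖EuclideanSpace.single (⟨0, hd⟩ : Fin d) (1:ℝ) - 0‖ = 1 := by
      simp [EuclideanSpace.norm_single]
    rw [h1, mul_one] at h
    exact le_trans (norm_nonneg _) h
  have hcoord : ∀ k, |g₁ k - g₂ k| ≤ L' * ε := by
    intro k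
    have heq : g₁ k - g₂ k = ∑ i, α k i * (gradient (f i) (w i) k - gradient (f i) v k) := by
      rw [hg₁, hg₂, ← Finset.sum_sub_distrib]
      congr 1; ext i; ring
    rw [heq]
    calc |∑ i, α k i * (gradient (f i) (w i) k - gradient (f i) v k)|
        ≤ ∑ i, |α k i * (gradient (f i) (w i) k - gradient (f i) v k)| :=
          Finset.abs_sum_le_sum_abs _ _
      _ ≤ ∑ i, α k i * (L' * ε) := by
          apply Finset.sum_le_sum
          intro i _
          rw [abs_mul, abs_of_nonneg (hα0 k i)]
          apply mul_le_mul_of_nonneg_left _ (hα0 k i)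
          calc |gradient (f i) (w i) k - gradient (f i) v k|
              = |(gradient (f i) (w i) - gradient (f i) v) k| := rfl
            _ ≤ ‖gradient (f i) (w i) - gradient (f i) v‖ := abs_coord_le_norm _ k
            _ ≤ L' * ‖w i - v‖ := hLip i _ _
            _ ≤ L' * ε := mul_le_mul_of_nonneg_left (hw i) hL'
      _ = L' * ε := by rw [← Finset.sum_mul, hα1 k, one_mul]
  rw [EuclideanSpace.norm_eq]
  have hsum : ∑ k, ‖(g₁ - g₂) k‖ ^ 2 ≤ ∑ _k : Fin d, (L' * ε) ^ 2 := by
    apply Finset.sum_le_sum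
    intro k _
    have h1 : (g₁ - g₂) k = g₁ k - g₂ k := rfl
    rw [h1, Real.norm_eq_abs, sq_abs, ← sq_abs]
    exact pow_le_pow_left₀ (abs_nonneg _) (hcoord k) 2
  calc Real.sqrt (∑ k, ‖(g₁ - g₂) k‖ ^ 2)
      ≤ Real.sqrt (∑ _k : Fin d, (L' * ε) ^ 2) := Real.sqrt_le_sqrt hsum
    _ = Real.sqrt (d * (L' * ε) ^ 2) := by
        rw [Finset.sum_const, Finset.card_univ, Fintype.card_fin, nsmul_eq_mul]
    _ = Real.sqrt d * L' * ε := by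
        rw [Real.sqrt_mul (Nat.cast_nonneg d), Real.sqrt_sq (mul_nonneg hL' hε), mul_assoc]
end
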